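/- Assume the no-tie condition (for all θ and all p ∈ 𝒫, D_θ({(r,a) : r = ⟨p,a⟩}) = 0) and P_max > R_max/b_min. Define the envelope objective f(p) := ⟨p, b⟩ + max_θ g_θ(p) and let 𝒫⋆ := argmin_{p ∈ 𝒫} f(p). Then the set of saddle points of L(w,p) := ⟨p,b⟩ + ∑_θ w_θ g_θ(p) over Δ_K × 𝒫 is exactly {(w, p) ∈ Δ_K × 𝒫 : p ∈ 𝒫⋆, supp(w) ⊆ argmax_θ g_θ(p), H(w, p) ≤ b componentwise, and ⟨p, b − H(w, p)⟩ = 0}. -/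

import Mathlib

open MeasureTheory

/-- Surplus function `g_θ(p) = E_{(r,a)∼D}[(r − ⟨p,a⟩)₊]`. -/
noncomputable def surplus {d : ℕ} (D : Measure (ℝ × (Fin d → ℝ))) (p : Fin d → ℝ) : ℝ :=
  ∫ z, max (z.1 - ∑ i, p i * z.2 i) 0 ∂D

/-- Threshold consumption `h_θ(p) = E_{(r,a)∼D}[a · 1{r > ⟨p,a⟩}]`. -/
noncomputable def consumption {d : ℕ} (D : Measure (ℝ × (Fin d → ℝ))) (p : Fin d → ℝ) :
    Fin d → ℝ :=
  fun i => ∫ z, (if (∑ j, p j * z.2 j) < z.1 then z.2 i else 0) ∂D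

open Filter Topology Set

/-!
Pointwise, `(r - ⟨p, a⟩)₊` is convex in `p` with subgradient `-a · 1{r > ⟨p, a⟩}`, so
`L(w, ·)` is convex with subgradient `b - H(w, ·)`, while `L(·, p)` is linear on the simplex.
Maximality in `w` is the support condition; it gives `L(w, p) = f(p)`, and since `L(w, ·) ≤ f`,
`p` then minimizes `f`. Minimality in `p` on the box is equivalent to `H ≤ b` together with
`⟨p, b - H⟩ = 0`: sufficiency is the subgradient inequality; for necessity, move one coordinate
of `p` by `ε`, apply the subgradient inequality at the moved point, and let `ε → 0`. This needs
`H(w, ·)` to be continuous along coordinate directions: from above always (dominated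
convergence, as `a ≥ 0`), from below by the no-tie condition. The face `p_i = P_max` is never
reached, since `p_i b_min ≤ L(w, p) ≤ L(w, 0) ≤ R_max`.
-/

section Simplex

variable {ι : Type*} [Fintype ι] {w g : ι → ℝ}

lemma sum_mul_le_iSup (hw : w ∈ stdSimplex ℝ ι) : ∑ θ, w θ * g θ ≤ ⨆ θ, g θ :=
  calc ∑ θ, w θ * g θ ≤ ∑ θ, w θ * ⨆ θ, g θ := by
        gcongr with θ
        · exact hw.1 θ
        · exact le_ciSup (Finite.bddAbove_range g) θ
    _ = ⨆ θ, g θ := by rw [← Finset.sum_mul, hw.2, one_mul]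

lemma sum_mul_eq_iSup (hw : w ∈ stdSimplex ℝ ι) (hsupp : ∀ θ, 0 < w θ → ∀ θ', g θ' ≤ g θ) :
    ∑ θ, w θ * g θ = ⨆ θ, g θ := by
  have hterm : ∀ θ, w θ * g θ = w θ * ⨆ θ, g θ := fun θ => by
    rcases (hw.1 θ).eq_or_lt with h | h
    · simp [← h]
    · have : Nonempty ι := ⟨θ⟩
      rw [le_antisymm (le_ciSup (Finite.bddAbove_range g) θ) (ciSup_le (hsupp θ h))]
  rw [Finset.sum_congr rfl fun θ _ => hterm θ, ← Finset.sum_mul, hw.2, one_mul]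

lemma isMaxOn_stdSimplex_iff [DecidableEq ι] (hw : w ∈ stdSimplex ℝ ι) :
    IsMaxOn (fun v => ∑ θ, v θ * g θ) (stdSimplex ℝ ι) w ↔
      ∀ θ, 0 < w θ → ∀ θ', g θ' ≤ g θ := by
  refine ⟨fun hmax θ hθ θ' => ?_, fun hsupp => isMaxOn_iff.2 fun v hv =>
    (sum_mul_le_iSup hv).trans (sum_mul_eq_iSup hw hsupp).ge⟩
  have : Nonempty ι := ⟨θ⟩
  obtain ⟨θ₀, hθ₀⟩ := exists_eq_ciSup_of_finite (f := g)
  by_contra! hlt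
  have hle : ⨆ θ, g θ ≤ ∑ θ, w θ * g θ := by
    simpa [Pi.single_apply, ← hθ₀] using isMaxOn_iff.1 hmax _ (single_mem_stdSimplex ℝ θ₀)
  have hlt' : ∑ θ, w θ * g θ < ∑ θ, w θ * ⨆ θ, g θ :=
    Finset.sum_lt_sum
      (fun τ _ => mul_le_mul_of_nonneg_left (le_ciSup (Finite.bddAbove_range g) τ) (hw.1 τ))
      ⟨θ, Finset.mem_univ _, mul_lt_mul_of_pos_left
        (hlt.trans_le (le_ciSup (Finite.bddAbove_range g) θ')) hθ⟩
  rw [← Finset.sum_mul, hw.2, one_mul] at hlt'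
  exact hlt'.not_ge hle

end Simplex

section FirstOrder

variable {ι : Type*} [Fintype ι] {F : (ι → ℝ) → ℝ} {G : (ι → ℝ) → ι → ℝ}
  {S : Set (ι → ℝ)} {p : ι → ℝ}

lemma isMinOn_of_complementarity (hsub : ∀ q ∈ S, F p + ∑ i, (q i - p i) * G p i ≤ F q)
    (hS : ∀ q ∈ S, 0 ≤ q) (hG : 0 ≤ G p) (hcs : ∑ i, p i * G p i = 0) : IsMinOn F S p := by
  refine isMinOn_iff.2 fun q hq => ?_
  have hsubq := hsub q hq
  have hnonneg : 0 ≤ ∑ i, q i * G p i :=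
    Finset.sum_nonneg fun i _ => mul_nonneg (hS q hq i) (hG i)
  simp only [sub_mul, Finset.sum_sub_distrib, hcs] at hsubq
  linarith

lemma sum_sub_add_single_mul [DecidableEq ι] (p : ι → ℝ) (i : ι) (ε : ℝ) (x : ι → ℝ) :
    ∑ j, (p j - (p + Pi.single i ε : ι → ℝ) j) * x j = -(ε * x i) := by
  simp [Pi.single_apply]

lemma mul_nonneg_of_isMinOn [DecidableEq ι]
    (hsub : ∀ p ∈ S, ∀ q ∈ S, F p + ∑ i, (q i - p i) * G p i ≤ F q)
    (hmin : IsMinOn F S p) (hp : p ∈ S) {i : ι} {ε : ℝ} (hε : p + Pi.single i ε ∈ S) :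
    0 ≤ ε * G (p + Pi.single i ε) i := by
  have h := hsub _ hε p hp
  rw [sum_sub_add_single_mul] at h
  linarith [isMinOn_iff.1 hmin _ hε]

lemma complementarity_of_isMinOn_pi_Icc [DecidableEq ι] {c : ℝ}
    (hsub : ∀ p ∈ {q | ∀ i, q i ∈ Icc 0 c}, ∀ q ∈ {q | ∀ i, q i ∈ Icc 0 c},
      F p + ∑ i, (q i - p i) * G p i ≤ F q)
    (hmin : IsMinOn F {q | ∀ i, q i ∈ Icc 0 c} p) (hp : ∀ i, p i ∈ Icc 0 c)
    (hpc : ∀ i, p i < c)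
    (hright : ∀ i, Tendsto (fun ε => G (p + Pi.single i ε) i) (𝓝[>] 0) (𝓝 (G p i)))
    (hleft : ∀ i, Tendsto (fun ε => G (p + Pi.single i ε) i) (𝓝[<] 0) (𝓝 (G p i))) :
    0 ≤ G p ∧ ∑ i, p i * G p i = 0 := by
  have hmem : ∀ i ε, p i + ε ∈ Icc 0 c → p + Pi.single i ε ∈ {q | ∀ i, q i ∈ Icc 0 c} := by
    intro i ε hε j
    rcases eq_or_ne j i with rfl | hji
    · simpa using hε
    · simpa [hji] using hp j
  have hG : 0 ≤ G p := fun i => ge_of_tendsto (hright i) <| by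
    filter_upwards [Ioo_mem_nhdsGT (sub_pos.2 (hpc i))] with ε hε
    refine nonneg_of_mul_nonneg_right (mul_nonneg_of_isMinOn hsub hmin hp (hmem i ε ?_)) hε.1
    constructor <;> linarith [hε.1, hε.2, (hp i).1]
  refine ⟨hG, Finset.sum_eq_zero fun i _ => ?_⟩
  rcases (hp i).1.eq_or_lt with hpi | hpi
  · rw [← hpi, zero_mul]
  have hGle : G p i ≤ 0 := le_of_tendsto (hleft i) <| by
    filter_upwards [Ioo_mem_nhdsLT (neg_lt_zero.2 hpi)] with ε hε
    refine nonpos_of_mul_nonneg_right (mul_nonneg_of_isMinOn hsub hmin hp (hmem i ε ?_)) hε.2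
    constructor <;> linarith [hε.1, hε.2, hpc i]
  rw [le_antisymm hGle (hG i), mul_zero]

end FirstOrder

lemma max_sub_zero_le_max_sub_zero_add (r s t : ℝ) :
    max (r - t) 0 ≤ max (r - s) 0 + if t < r then s - t else 0 := by
  split_ifs with h
  · rw [max_eq_left (sub_nonneg.2 h.le)]
    linarith [le_max_left (r - s) 0]
  · rw [max_eq_right (by linarith), add_zero]
    exact le_max_right _ _

lemma eventually_add_mul_lt_iff_of_ne {t r : ℝ} (a : ℝ) (h : t ≠ r) :
    ∀ᶠ ε in 𝓝 0, (t + ε * a < r ↔ t < r) := by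
  have hlim : Tendsto (fun ε => t + ε * a) (𝓝 0) (𝓝 t) := by
    have : Continuous fun ε : ℝ => t + ε * a := by fun_prop
    simpa using this.tendsto 0
  rcases h.lt_or_gt with h | h
  · filter_upwards [hlim.eventually_lt_const h] with ε hε using iff_of_true hε h
  · filter_upwards [hlim.eventually_const_lt h] with ε hε using iff_of_false hε.not_gt h.not_gt

lemma eventually_add_mul_lt_iff_nhdsGT {t r a : ℝ} (ha : 0 ≤ a) :
    ∀ᶠ ε in 𝓝[>] 0, (t + ε * a < r ↔ t < r) := by
  rcases ne_or_eq t r with h | rfl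
  · exact nhdsWithin_le_nhds (eventually_add_mul_lt_iff_of_ne a h)
  · filter_upwards [self_mem_nhdsWithin] with ε (hε : 0 < ε)
    exact iff_of_false (by nlinarith) (lt_irrefl t)

lemma sum_add_single_mul {d : ℕ} (p : Fin d → ℝ) (i : Fin d) (ε : ℝ) (a : Fin d → ℝ) :
    ∑ j, (p + Pi.single i ε : Fin d → ℝ) j * a j = ∑ j, p j * a j + ε * a i := by
  simp [add_mul, Finset.sum_add_distrib, Pi.single_apply]

section Demand

variable {d : ℕ} {D : Measure (ℝ × (Fin d → ℝ))} {Rmax Amax : ℝ}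

def HasBoundedSupport (D : Measure (ℝ × (Fin d → ℝ))) (Rmax Amax : ℝ) : Prop :=
  ∀ᵐ z ∂D, 0 ≤ z.1 ∧ z.1 ≤ Rmax ∧ ∀ i, 0 ≤ z.2 i ∧ z.2 i ≤ Amax

lemma measurable_consumption_integrand (p : Fin d → ℝ) (i : Fin d) :
    Measurable fun z : ℝ × (Fin d → ℝ) => if ∑ j, p j * z.2 j < z.1 then z.2 i else 0 :=
  Measurable.ite (measurableSet_lt (by fun_prop) measurable_fst) (by fun_prop) measurable_const

lemma norm_consumption_integrand_le
    (hD : HasBoundedSupport D Rmax Amax) (p : Fin d → ℝ) (i : Fin d) :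
    ∀ᵐ z ∂D, ‖if ∑ j, p j * z.2 j < z.1 then z.2 i else 0‖ ≤ Amax := by
  filter_upwards [hD] with z hz
  obtain ⟨h0, hA⟩ := hz.2.2 i
  split_ifs <;> simpa [abs_of_nonneg h0] using by linarith

lemma surplus_integrand_le
    (hD : HasBoundedSupport D Rmax Amax) {p : Fin d → ℝ} (hp : 0 ≤ p) :
    ∀ᵐ z ∂D, max (z.1 - ∑ i, p i * z.2 i) 0 ≤ Rmax := by
  filter_upwards [hD] with z ⟨hr0, hr, ha⟩
  have : 0 ≤ ∑ i, p i * z.2 i := Finset.sum_nonneg fun i _ => mul_nonneg (hp i) (ha i).1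
  exact max_le (by linarith) (hr0.trans hr)

lemma surplus_nonneg (p : Fin d → ℝ) : 0 ≤ surplus D p :=
  integral_nonneg fun _ => le_max_right _ _

variable [IsFiniteMeasure D]

lemma integrable_consumption_integrand
    (hD : HasBoundedSupport D Rmax Amax) (p : Fin d → ℝ) (i : Fin d) :
    Integrable (fun z : ℝ × (Fin d → ℝ) => if ∑ j, p j * z.2 j < z.1 then z.2 i else 0) D :=
  (integrable_const Amax).mono' (measurable_consumption_integrand p i).aestronglyMeasurable
    (norm_consumption_integrand_le hD p i)

lemma integrable_surplus_integrand
    (hD : HasBoundedSupport D Rmax Amax) {p : Fin d → ℝ} (hp : 0 ≤ p) :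
    Integrable (fun z : ℝ × (Fin d → ℝ) => max (z.1 - ∑ i, p i * z.2 i) 0) D := by
  refine (integrable_const Rmax).mono' (by fun_prop) ?_
  filter_upwards [surplus_integrand_le hD hp] with z hz
  rwa [Real.norm_of_nonneg (le_max_right _ _)]

lemma surplus_le_add_sum_mul_consumption
    (hD : HasBoundedSupport D Rmax Amax)
    {p q : Fin d → ℝ} (hp : 0 ≤ p) (hq : 0 ≤ q) :
    surplus D p ≤ surplus D q + ∑ i, (q i - p i) * consumption D p i := by
  have hint : Integrable (fun z : ℝ × (Fin d → ℝ) =>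
      ∑ i, (q i - p i) * if ∑ j, p j * z.2 j < z.1 then z.2 i else 0) D :=
    integrable_finsetSum _ fun i _ => (integrable_consumption_integrand hD p i).const_mul _
  have hsum : ∑ i, (q i - p i) * consumption D p i =
      ∫ z, ∑ i, (q i - p i) * (if ∑ j, p j * z.2 j < z.1 then z.2 i else 0) ∂D := by
    rw [integral_finsetSum _ fun i _ => (integrable_consumption_integrand hD p i).const_mul _]
    simp only [integral_const_mul, consumption]
  rw [hsum, surplus, surplus, ← integral_add (integrable_surplus_integrand hD hq) hint]
  refine integral_mono (integrable_surplus_integrand hD hp)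
    ((integrable_surplus_integrand hD hq).add hint) fun z => ?_
  have := max_sub_zero_le_max_sub_zero_add z.1 (∑ i, q i * z.2 i) (∑ i, p i * z.2 i)
  split_ifs at this ⊢ <;> simpa [sub_mul, Finset.sum_sub_distrib] using this

lemma tendsto_consumption {α : Type*} {l : Filter α} [l.IsCountablyGenerated]
    (hD : HasBoundedSupport D Rmax Amax)
    {q : α → Fin d → ℝ} {p : Fin d → ℝ} (i : Fin d)
    (h : ∀ᵐ z ∂D, ∀ᶠ n in l, (∑ j, q n j * z.2 j < z.1 ↔ ∑ j, p j * z.2 j < z.1)) :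
    Tendsto (fun n => consumption D (q n) i) l (𝓝 (consumption D p i)) := by
  refine tendsto_integral_filter_of_dominated_convergence (fun _ => Amax)
    (Eventually.of_forall fun n => (measurable_consumption_integrand (q n) i).aestronglyMeasurable)
    (Eventually.of_forall fun n => norm_consumption_integrand_le hD (q n) i)
    (integrable_const Amax) ?_
  filter_upwards [h] with z hz
  refine tendsto_const_nhds.congr' ?_
  filter_upwards [hz] with n hn
  simp only [hn]

lemma tendsto_consumption_add_single_nhdsGT
    (hD : HasBoundedSupport D Rmax Amax) (p : Fin d → ℝ) (i : Fin d) :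
    Tendsto (fun ε => consumption D (p + Pi.single i ε) i) (𝓝[>] 0)
      (𝓝 (consumption D p i)) := by
  refine tendsto_consumption hD i ?_
  filter_upwards [hD] with z hz
  simpa only [sum_add_single_mul] using eventually_add_mul_lt_iff_nhdsGT (hz.2.2 i).1

lemma tendsto_consumption_add_single
    (hD : HasBoundedSupport D Rmax Amax)
    {p : Fin d → ℝ} (hp : D {z | z.1 = ∑ j, p j * z.2 j} = 0) (i : Fin d) :
    Tendsto (fun ε => consumption D (p + Pi.single i ε) i) (𝓝 0) (𝓝 (consumption D p i)) := by
  refine tendsto_consumption hD i ?_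
  filter_upwards [measure_eq_zero_iff_ae_notMem.1 hp] with z hz
  simpa only [sum_add_single_mul] using eventually_add_mul_lt_iff_of_ne (z.2 i) (Ne.symm hz)

end Demand

lemma surplus_le {d : ℕ} {D : Measure (ℝ × (Fin d → ℝ))} [IsProbabilityMeasure D] {Rmax Amax : ℝ}
    (hD : HasBoundedSupport D Rmax Amax) {p : Fin d → ℝ} (hp : 0 ≤ p) : surplus D p ≤ Rmax := by
  refine (integral_mono_ae (integrable_surplus_integrand hD hp) (integrable_const Rmax)
    (surplus_integrand_le hD hp)).trans_eq ?_
  simp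

section Lagrangian

variable {ι : Type*} [Fintype ι] {d : ℕ}

noncomputable def lagrangian (D : ι → Measure (ℝ × (Fin d → ℝ))) (b : Fin d → ℝ) (w : ι → ℝ)
    (p : Fin d → ℝ) : ℝ :=
  ∑ i, p i * b i + ∑ θ, w θ * surplus (D θ) p

noncomputable def aggregateConsumption (D : ι → Measure (ℝ × (Fin d → ℝ))) (w : ι → ℝ)
    (p : Fin d → ℝ) (i : Fin d) : ℝ :=
  ∑ θ, w θ * consumption (D θ) p i

variable {D : ι → Measure (ℝ × (Fin d → ℝ))} {Rmax Amax : ℝ} {b : Fin d → ℝ} {w : ι → ℝ}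
  {p : Fin d → ℝ}

lemma isMaxOn_lagrangian_iff [DecidableEq ι] (hw : w ∈ stdSimplex ℝ ι) :
    IsMaxOn (fun v => lagrangian D b v p) (stdSimplex ℝ ι) w ↔
      ∀ θ, 0 < w θ → ∀ θ', surplus (D θ') p ≤ surplus (D θ) p := by
  rw [← isMaxOn_stdSimplex_iff hw]
  simp only [isMaxOn_iff, lagrangian, add_le_add_iff_left]

lemma mul_le_of_lagrangian_le_lagrangian_zero [∀ θ, IsProbabilityMeasure (D θ)]
    (hD : ∀ θ, HasBoundedSupport (D θ) Rmax Amax)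
    (hb : 0 ≤ b) (hw : w ∈ stdSimplex ℝ ι) (hp : 0 ≤ p)
    (h : lagrangian D b w p ≤ lagrangian D b w 0) (i : Fin d) : p i * b i ≤ Rmax := by
  have hsurplus : ∑ θ, w θ * surplus (D θ) 0 ≤ Rmax :=
    calc ∑ θ, w θ * surplus (D θ) 0 ≤ ∑ θ, w θ * Rmax := by
          gcongr with θ
          · exact hw.1 θ
          · exact surplus_le (hD θ) le_rfl
      _ = Rmax := by rw [← Finset.sum_mul, hw.2, one_mul]
  have hpb : p i * b i ≤ ∑ j, p j * b j :=
    Finset.single_le_sum (fun j _ => mul_nonneg (hp j) (hb j)) (Finset.mem_univ i)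
  have hpos : 0 ≤ ∑ θ, w θ * surplus (D θ) p :=
    Finset.sum_nonneg fun θ _ => mul_nonneg (hw.1 θ) (surplus_nonneg p)
  simp only [lagrangian, Pi.zero_apply, zero_mul, Finset.sum_const_zero, zero_add] at h
  linarith

lemma lt_of_isMinOn_lagrangian [∀ θ, IsProbabilityMeasure (D θ)]
    (hD : ∀ θ, HasBoundedSupport (D θ) Rmax Amax)
    (hb : ∀ i, 0 < b i) {bmin c : ℝ} (hbmin : IsLeast (range b) bmin) (hc : Rmax / bmin < c)
    (hw : w ∈ stdSimplex ℝ ι) (hp : ∀ i, p i ∈ Icc 0 c)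
    (hmin : IsMinOn (lagrangian D b w) {q | ∀ i, q i ∈ Icc 0 c} p) (i : Fin d) : p i < c := by
  obtain ⟨⟨i₀, rfl⟩, hbmin⟩ := hbmin
  have hpb := mul_le_of_lagrangian_le_lagrangian_zero hD (fun j => (hb j).le) hw (fun j => (hp j).1)
    (isMinOn_iff.1 hmin 0 fun j => ⟨le_rfl, (hp j).1.trans (hp j).2⟩) i
  calc p i ≤ Rmax / b i₀ := (le_div_iff₀ (hb i₀)).2 <|
        (mul_le_mul_of_nonneg_left (hbmin ⟨i, rfl⟩) (hp i).1).trans hpb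
    _ < c := hc

variable [∀ θ, IsFiniteMeasure (D θ)]

lemma lagrangian_add_sum_mul_le
    (hD : ∀ θ, HasBoundedSupport (D θ) Rmax Amax)
    (hw : 0 ≤ w) (hp : 0 ≤ p) {q : Fin d → ℝ} (hq : 0 ≤ q) :
    lagrangian D b w p + ∑ i, (q i - p i) * (b i - aggregateConsumption D w p i) ≤
      lagrangian D b w q := by
  have hθ : ∀ θ, w θ * surplus (D θ) p ≤
      w θ * surplus (D θ) q + ∑ i, (q i - p i) * (w θ * consumption (D θ) p i) := fun θ => by
    have := mul_le_mul_of_nonneg_left (surplus_le_add_sum_mul_consumption (hD θ) hp hq) (hw θ)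
    simpa only [mul_add, Finset.mul_sum, mul_left_comm] using this
  have hsum := Finset.sum_le_sum fun θ (_ : θ ∈ Finset.univ) => hθ θ
  rw [Finset.sum_add_distrib, Finset.sum_comm] at hsum
  simp only [← Finset.mul_sum, sub_mul, Finset.sum_sub_distrib] at hsum
  simp only [lagrangian, aggregateConsumption, mul_sub, Finset.sum_sub_distrib, sub_mul]
  linarith

lemma isMinOn_lagrangian_of_complementarity
    (hD : ∀ θ, HasBoundedSupport (D θ) Rmax Amax)
    (hw : 0 ≤ w) {c : ℝ} (hp : ∀ i, p i ∈ Icc 0 c) (hHb : ∀ i, aggregateConsumption D w p i ≤ b i)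
    (hcs : ∑ i, p i * (b i - aggregateConsumption D w p i) = 0) :
    IsMinOn (lagrangian D b w) {q | ∀ i, q i ∈ Icc 0 c} p :=
  isMinOn_of_complementarity (G := fun q i => b i - aggregateConsumption D w q i)
    (fun _ hq => lagrangian_add_sum_mul_le hD hw (fun i => (hp i).1) fun i => (hq i).1)
    (fun _ hq i => (hq i).1) (fun i => sub_nonneg.2 (hHb i)) hcs

lemma complementarity_of_isMinOn_lagrangian
    (hD : ∀ θ, HasBoundedSupport (D θ) Rmax Amax)
    (hw : 0 ≤ w) {c : ℝ} (hp : ∀ i, p i ∈ Icc 0 c) (hpc : ∀ i, p i < c)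
    (hnotie : ∀ θ, D θ {z | z.1 = ∑ i, p i * z.2 i} = 0)
    (hmin : IsMinOn (lagrangian D b w) {q | ∀ i, q i ∈ Icc 0 c} p) :
    (∀ i, aggregateConsumption D w p i ≤ b i) ∧
      ∑ i, p i * (b i - aggregateConsumption D w p i) = 0 := by
  obtain ⟨hHb, hcs⟩ := complementarity_of_isMinOn_pi_Icc
    (G := fun q i => b i - aggregateConsumption D w q i)
    (fun _ hp _ hq => lagrangian_add_sum_mul_le hD hw (fun i => (hp i).1) fun i => (hq i).1)
    hmin hp hpc
    (fun i => tendsto_const_nhds.sub <| tendsto_finsetSum _ fun θ _ =>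
      (tendsto_consumption_add_single_nhdsGT (hD θ) p i).const_mul _)
    (fun i => tendsto_const_nhds.sub <| tendsto_finsetSum _ fun θ _ =>
      ((tendsto_consumption_add_single (hD θ) (hnotie θ) i).mono_left
        nhdsWithin_le_nhds).const_mul _)
  exact ⟨fun i => sub_nonneg.1 (hHb i), hcs⟩

end Lagrangian

theorem stmt2_general (K d : ℕ)
    (Rmax Amax : ℝ)
    (D : Fin K → Measure (ℝ × (Fin d → ℝ)))
    (hDp : ∀ θ, IsProbabilityMeasure (D θ))
    (hDs : ∀ θ, ∀ᵐ z ∂ D θ, 0 ≤ z.1 ∧ z.1 ≤ Rmax ∧ ∀ i, 0 ≤ z.2 i ∧ z.2 i ≤ Amax)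
    (b : Fin d → ℝ) (hb : ∀ i, 0 < b i)
    (bmin : ℝ) (hbmin : IsLeast (Set.range b) bmin)
    (Pmax : ℝ) (hP : Rmax / bmin < Pmax)
    (hnotie : ∀ θ, ∀ p : Fin d → ℝ, (∀ i, p i ∈ Set.Icc 0 Pmax) →
      D θ {z | z.1 = ∑ i, p i * z.2 i} = 0)
    (L : (Fin K → ℝ) → (Fin d → ℝ) → ℝ)
    (hL : ∀ w p, L w p = (∑ i, p i * b i) + ∑ θ, w θ * surplus (D θ) p)
    (H : (Fin K → ℝ) → (Fin d → ℝ) → Fin d → ℝ)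
    (hH : ∀ w p i, H w p i = ∑ θ, w θ * consumption (D θ) p i)
    (f : (Fin d → ℝ) → ℝ)
    (hf : ∀ p, f p = (∑ i, p i * b i) + sSup (Set.range fun θ => surplus (D θ) p)) :
    {wp : (Fin K → ℝ) × (Fin d → ℝ) |
        ((∀ θ, 0 ≤ wp.1 θ) ∧ ∑ θ, wp.1 θ = 1) ∧ (∀ i, wp.2 i ∈ Set.Icc 0 Pmax) ∧
        (∀ w : Fin K → ℝ, (∀ θ, 0 ≤ w θ) ∧ ∑ θ, w θ = 1 → L w wp.2 ≤ L wp.1 wp.2) ∧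
        (∀ p : Fin d → ℝ, (∀ i, p i ∈ Set.Icc 0 Pmax) → L wp.1 wp.2 ≤ L wp.1 p)}
      =
    {wp : (Fin K → ℝ) × (Fin d → ℝ) |
        ((∀ θ, 0 ≤ wp.1 θ) ∧ ∑ θ, wp.1 θ = 1) ∧ (∀ i, wp.2 i ∈ Set.Icc 0 Pmax) ∧
        (∀ q : Fin d → ℝ, (∀ i, q i ∈ Set.Icc 0 Pmax) → f wp.2 ≤ f q) ∧
        (∀ θ, 0 < wp.1 θ → ∀ θ', surplus (D θ') wp.2 ≤ surplus (D θ) wp.2) ∧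
        (∀ i, H wp.1 wp.2 i ≤ b i) ∧
        (∑ i, wp.2 i * (b i - H wp.1 wp.2 i)) = 0} := by
  have := hDp
  obtain rfl : L = lagrangian D b := funext₂ hL
  obtain rfl : H = aggregateConsumption D := funext₃ hH
  ext ⟨w, p⟩
  simp only [mem_ofPred_eq]
  constructor
  · rintro ⟨hw, hp, hwmax, hpmin⟩
    have hsupp := (isMaxOn_lagrangian_iff hw).1 (isMaxOn_iff.2 hwmax)
    have hmin : IsMinOn (lagrangian D b w) {q | ∀ i, q i ∈ Icc 0 Pmax} p := isMinOn_iff.2 hpmin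
    obtain ⟨hHb, hcs⟩ := complementarity_of_isMinOn_lagrangian hDs hw.1 hp
      (lt_of_isMinOn_lagrangian hDs hb hbmin hP hw hp hmin) (fun θ => hnotie θ p hp) hmin
    refine ⟨hw, hp, fun q hq => ?_, hsupp, hHb, hcs⟩
    calc f p = lagrangian D b w p := by rw [hf, lagrangian, sum_mul_eq_iSup hw hsupp]; rfl
      _ ≤ lagrangian D b w q := hpmin q hq
      _ ≤ f q := by rw [hf, lagrangian]; exact add_le_add_right (sum_mul_le_iSup hw) _
  · rintro ⟨hw, hp, -, hsupp, hHb, hcs⟩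
    exact ⟨hw, hp, isMaxOn_iff.1 ((isMaxOn_lagrangian_iff hw).2 hsupp),
      isMinOn_iff.1 (isMinOn_lagrangian_of_complementarity hDs hw.1 hp hHb hcs)⟩

/-- characterization of all saddle points.  Under the no-tie condition and
`P_max > R_max / b_min`, with `f(p) = ⟨p,b⟩ + max_θ g_θ(p)` and `𝒫⋆ = argmin_{𝒫} f`, the
set of saddle points of `L(w,p) = ⟨p,b⟩ + ∑_θ w_θ g_θ(p)` on `Δ_K × 𝒫` is exactly
`{(w,p) : p ∈ 𝒫⋆, supp(w) ⊆ argmax_θ g_θ(p), H(w,p) ≤ b, ⟨p, b − H(w,p)⟩ = 0}`. -/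
theorem stmt2 (K d : ℕ) (hK : 1 ≤ K) (hd : 1 ≤ d)
    (Rmax Amax : ℝ) (hR : 0 < Rmax) (hA : 0 < Amax)
    (D : Fin K → Measure (ℝ × (Fin d → ℝ)))
    (hDp : ∀ θ, IsProbabilityMeasure (D θ))
    (hDs : ∀ θ, ∀ᵐ z ∂ D θ, 0 ≤ z.1 ∧ z.1 ≤ Rmax ∧ ∀ i, 0 ≤ z.2 i ∧ z.2 i ≤ Amax)
    (b : Fin d → ℝ) (hb : ∀ i, 0 < b i)
    (bmin : ℝ) (hbmin : IsLeast (Set.range b) bmin)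
    (Pmax : ℝ) (hP : Rmax / bmin < Pmax)
    (hnotie : ∀ θ, ∀ p : Fin d → ℝ, (∀ i, p i ∈ Set.Icc 0 Pmax) →
      D θ {z | z.1 = ∑ i, p i * z.2 i} = 0)
    (L : (Fin K → ℝ) → (Fin d → ℝ) → ℝ)
    (hL : ∀ w p, L w p = (∑ i, p i * b i) + ∑ θ, w θ * surplus (D θ) p)
    (H : (Fin K → ℝ) → (Fin d → ℝ) → Fin d → ℝ)
    (hH : ∀ w p i, H w p i = ∑ θ, w θ * consumption (D θ) p i)
    (f : (Fin d → ℝ) → ℝ)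
    (hf : ∀ p, f p = (∑ i, p i * b i) + sSup (Set.range fun θ => surplus (D θ) p)) :
    {wp : (Fin K → ℝ) × (Fin d → ℝ) |
        ((∀ θ, 0 ≤ wp.1 θ) ∧ ∑ θ, wp.1 θ = 1) ∧ (∀ i, wp.2 i ∈ Set.Icc 0 Pmax) ∧
        (∀ w : Fin K → ℝ, (∀ θ, 0 ≤ w θ) ∧ ∑ θ, w θ = 1 → L w wp.2 ≤ L wp.1 wp.2) ∧
        (∀ p : Fin d → ℝ, (∀ i, p i ∈ Set.Icc 0 Pmax) → L wp.1 wp.2 ≤ L wp.1 p)}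
      =
    {wp : (Fin K → ℝ) × (Fin d → ℝ) |
        ((∀ θ, 0 ≤ wp.1 θ) ∧ ∑ θ, wp.1 θ = 1) ∧ (∀ i, wp.2 i ∈ Set.Icc 0 Pmax) ∧
        (∀ q : Fin d → ℝ, (∀ i, q i ∈ Set.Icc 0 Pmax) → f wp.2 ≤ f q) ∧
        (∀ θ, 0 < wp.1 θ → ∀ θ', surplus (D θ') wp.2 ≤ surplus (D θ) wp.2) ∧
        (∀ i, H wp.1 wp.2 i ≤ b i) ∧
        (∑ i, wp.2 i * (b i - H wp.1 wp.2 i)) = 0} :=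
  stmt2_general K d Rmax Amax D hDp hDs b hb bmin hbmin Pmax hP hnotie L hL H hH f hf
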